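/- arXiv:2603.00032 — 3 statements merged into one kernel-verified Lean document; each statement's English description precedes it below -/
import Mathlib

section
/- Let P : ℝ → ℝ be smooth, nonnegative, and flat at t₀ (all derivatives of P vanish at t₀, including P(t₀) = 0). Then the function q(t) = P'(t)²/P(t) (set to 0 where P = 0) tends to 0 as t → t₀. -/
lemma key_abs_sub_le {t h y : ℝ} (hy : y ∈ Set.uIcc t (t + h)) : |y - t| ≤ |h| := by
  rcases Set.mem_uIcc.mp hy with ⟨h1, h2⟩ | ⟨h1, h2⟩ <;>
    rcases abs_cases h with ⟨e, _⟩ | ⟨e, _⟩ <;>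
    rw [abs_le] <;> constructor <;> linarith

lemma key_ineq (P : ℝ → ℝ) (hP : ContDiff ℝ (⊤ : ℕ∞) P) (hpos : ∀ t, 0 ≤ P t)
    (ε δ t : ℝ) (hε : 0 < ε)
    (hbound : ∀ x ∈ Metric.ball t δ, |deriv (deriv P) x| ≤ ε)
    (hsmall : |deriv P t| ≤ ε * δ) :
    (deriv P t) ^ 2 ≤ 4 * ε * P t := by
  have hPinf : ContDiff ℝ ((⊤:ℕ∞) : WithTop ℕ∞) P := hP.of_le (by simp)
  by_cases hd : deriv P t = 0
  · have : 0 ≤ 4 * ε * P t := mul_nonneg (by linarith) (hpos t)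
    simpa [hd] using this
  have hd' : 0 < |deriv P t| := abs_pos.mpr hd
  have hδ : 0 < δ := by nlinarith
  set d := deriv P t with hdd
  set h : ℝ := -d / (2 * ε) with hh
  have habs : |h| ≤ δ / 2 := by
    rw [hh, abs_div, abs_neg, abs_of_pos (by positivity : (0:ℝ) < 2 * ε)]
    rw [div_le_div_iff₀ (by positivity) (by norm_num)]
    nlinarith
  have hsub : Set.uIcc t (t + h) ⊆ Metric.ball t δ := by
    intro y hy
    have := key_abs_sub_le hy
    simp only [Metric.mem_ball, Real.dist_eq]
    linarith
  have hP' := (contDiff_infty_iff_deriv.mp hPinf).2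
  -- Step 1 : |P' y - P' t| ≤ ε * |y - t| on the interval
  have step1 : ∀ y ∈ Set.uIcc t (t + h), |deriv P y - deriv P t| ≤ ε * |h| := by
    intro y hy
    have := Convex.norm_image_sub_le_of_norm_hasDerivWithin_le
      (f := deriv P) (f' := deriv (deriv P)) (s := Set.uIcc t (t + h)) (C := ε)
      (fun x _ => ((hP'.differentiable (by simp) x).hasDerivAt).hasDerivWithinAt)
      (fun x hx => by simpa [Real.norm_eq_abs] using hbound x (hsub hx))
      (convex_uIcc _ _) Set.left_mem_uIcc hy
    simp only [Real.norm_eq_abs] at this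
    calc |deriv P y - deriv P t| ≤ ε * |y - t| := this
      _ ≤ ε * |h| := by
        have := key_abs_sub_le hy
        nlinarith
  -- Step 2 : |P(t+h) - P t - h * d| ≤ ε * h ^ 2
  have step2 : |P (t + h) - P t - h * d| ≤ ε * h ^ 2 := by
    have key := Convex.norm_image_sub_le_of_norm_hasDerivWithin_le
      (f := fun y => P y - (y - t) * d) (f' := fun y => deriv P y - d)
      (s := Set.uIcc t (t + h)) (C := ε * |h|)
      (fun x _ => by
        have h1 : HasDerivAt (fun y => P y - (y - t) * d) (deriv P x - 1 * d) x :=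
          ((hP.differentiable (by simp) x).hasDerivAt).sub
            (((hasDerivAt_id x).sub_const t).mul_const d)
        simpa using h1.hasDerivWithinAt)
      (fun x hx => by simpa [Real.norm_eq_abs, hdd] using step1 x hx)
      (convex_uIcc _ _) Set.left_mem_uIcc Set.right_mem_uIcc
    simp only [Real.norm_eq_abs] at key
    have e1 : (t + h - t) * d = h * d := by ring
    have e2 : |t + h - t| = |h| := by ring_nf
    rw [e1, e2] at key
    have e3 : ε * |h| * |h| = ε * h ^ 2 := by
      rw [mul_assoc, abs_mul_abs_self]; ring
    have e4 : P (t + h) - h * d - (P t - (t - t) * d) = P (t + h) - P t - h * d := by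
      ring
    rw [e4, e3] at key
    exact key
  have h0 : 0 ≤ P (t + h) := hpos (t + h)
  have h1 : P (t + h) - P t - h * d ≤ ε * h ^ 2 := (abs_le.mp step2).2
  have hhd : h * d = -d ^ 2 / (2 * ε) := by rw [hh]; ring
  have hh2 : ε * h ^ 2 = d ^ 2 / (4 * ε) := by
    rw [hh]; field_simp; ring
  rw [hhd, hh2] at h1
  have : d ^ 2 / (4 * ε) ≤ P t := by
    have h4 : d ^ 2 / (2 * ε) - d ^ 2 / (4 * ε) = d ^ 2 / (4 * ε) := by
      field_simp; ring
    have h5 : -d ^ 2 / (2 * ε) = -(d ^ 2 / (2 * ε)) := by ring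
    linarith
  rw [div_le_iff₀ (by positivity)] at this
  nlinarith

/-- If `P` is smooth, nonnegative, and flat at `t₀` (all derivatives vanish,
including the value), then `q(t) = P'(t)²/P(t)` (set to `0` where `P = 0`)
tends to `0` as `t → t₀`. -/
theorem stmt_3 (P : ℝ → ℝ) (hP : ContDiff ℝ (⊤ : ℕ∞) P) (hpos : ∀ t, 0 ≤ P t)
    (t₀ : ℝ) (hflat : ∀ n : ℕ, iteratedDeriv n P t₀ = 0)
    (q : ℝ → ℝ) (hq : ∀ t, q t = if P t = 0 then 0 else (deriv P t) ^ 2 / P t) :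
    Filter.Tendsto q (nhds t₀) (nhds 0) := by
  have hPinf : ContDiff ℝ ((⊤:ℕ∞) : WithTop ℕ∞) P := hP.of_le (by simp)
  have hP' := (contDiff_infty_iff_deriv.mp hPinf).2
  have hd1 : deriv P t₀ = 0 := by
    have := hflat 1; rwa [iteratedDeriv_one] at this
  have hd2 : deriv (deriv P) t₀ = 0 := by
    have := hflat 2
    rwa [show (2:ℕ) = 1 + 1 from rfl, iteratedDeriv_succ, iteratedDeriv_one] at this
  rw [NormedAddCommGroup.tendsto_nhds_zero]
  intro ε hε
  set ε' : ℝ := ε / 5 with hε'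
  have hε'pos : 0 < ε' := by positivity
  -- continuity of second derivative
  have hc2 : Continuous (deriv (deriv P)) :=
    (contDiff_infty_iff_deriv.mp hP').2.continuous
  have hc1 : Continuous (deriv P) := hP'.continuous
  obtain ⟨δ, hδpos, hδ⟩ := Metric.continuousAt_iff.mp hc2.continuousAt ε' hε'pos
  obtain ⟨δ₁, hδ₁pos, hδ₁⟩ := Metric.continuousAt_iff.mp hc1.continuousAt
    (ε' * (δ / 2)) (by positivity)
  rw [Metric.eventually_nhds_iff]
  refine ⟨min δ₁ (δ / 2), by positivity, fun t ht => ?_⟩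
  have ht1 : dist t t₀ < δ₁ := lt_of_lt_of_le ht (min_le_left _ _)
  have ht2 : dist t t₀ < δ / 2 := lt_of_lt_of_le ht (min_le_right _ _)
  have hkey : (deriv P t) ^ 2 ≤ 4 * ε' * P t := by
    apply key_ineq P hP hpos ε' (δ / 2) t hε'pos
    · intro x hx
      have hxball : dist x t₀ < δ := by
        rw [Metric.mem_ball] at hx
        calc dist x t₀ ≤ dist x t + dist t t₀ := dist_triangle _ _ _
          _ < δ / 2 + δ / 2 := by linarith
          _ = δ := by ring
      have := hδ hxball
      rw [hd2, dist_zero_right, Real.norm_eq_abs] at this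
      exact le_of_lt this
    · have := hδ₁ ht1
      rw [hd1, dist_zero_right, Real.norm_eq_abs] at this
      exact le_of_lt this
  rw [hq t, Real.norm_eq_abs]
  by_cases hPt : P t = 0
  · simpa [hPt] using hε
  · have hPtpos : 0 < P t := lt_of_le_of_ne (hpos t) (Ne.symm hPt)
    rw [if_neg hPt, abs_of_nonneg (by positivity)]
    rw [div_lt_iff₀ hPtpos]
    have : 4 * ε' * P t < ε * P t := by
      rw [hε']; nlinarith
    linarith
end

section
/- Uniqueness in the quadrant decomposition: if A(y)/x + B(x)/y + R(x,y) = A'(y)/x + B'(x)/y + R'(x,y) for all x, y > 0, where A, A', B, B' : [0,∞) → ℝ are continuous and R, R' : ℝ² → ℝ are continuous, then A = A', B = B' on [0,∞), and R = R' on (0,∞)². -/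
open Filter Set Topology

/-- If `F` is continuous on `[0,∞)` then `x * F x → 0` as `x → 0⁺`. -/
lemma aux_mul_tendsto {F : ℝ → ℝ} (hF : ContinuousOn F (Set.Ici 0)) :
    Filter.Tendsto (fun x => x * F x) (𝓝[>] (0:ℝ)) (𝓝 0) := by
  have h1 : Filter.Tendsto F (𝓝[Set.Ici (0:ℝ)] 0) (𝓝 (F 0)) :=
    hF 0 (Set.self_mem_Ici)
  have h2 : Filter.Tendsto (fun x : ℝ => x) (𝓝[Set.Ici (0:ℝ)] 0) (𝓝 0) :=
    tendsto_id.mono_left nhdsWithin_le_nhds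
  have h3 := h2.mul h1
  rw [zero_mul] at h3
  exact h3.mono_left (nhdsWithin_mono _ Set.Ioi_subset_Ici_self)

/-- If a constant equals a function tending to `0` along `𝓝[>] 0`, it is `0`. -/
lemma aux_const_eq_zero {c : ℝ} {f : ℝ → ℝ}
    (hf : Filter.Tendsto f (𝓝[>] (0:ℝ)) (𝓝 0))
    (h : ∀ x : ℝ, 0 < x → f x = c) : c = 0 := by
  have h1 : Filter.Tendsto f (𝓝[>] (0:ℝ)) (𝓝 c) := by
    have : f =ᶠ[𝓝[>] (0:ℝ)] fun _ => c := by
      filter_upwards [self_mem_nhdsWithin] with x hx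
      exact h x hx
    exact Filter.Tendsto.congr' this.symm tendsto_const_nhds
  exact tendsto_nhds_unique h1 hf

/-- Uniqueness of the quadrant decomposition: if
`A(y)/x + B(x)/y + R(x,y) = A'(y)/x + B'(x)/y + R'(x,y)` on the open quadrant,
with `A, A', B, B'` continuous on `[0,∞)` and `R, R'` continuous on `ℝ²`, then
`A = A'`, `B = B'` on `[0,∞)` and `R = R'` on the open quadrant. -/
theorem stmt_15 (A A' B B' : ℝ → ℝ) (R R' : ℝ × ℝ → ℝ)
    (hA : ContinuousOn A (Set.Ici 0)) (hA' : ContinuousOn A' (Set.Ici 0))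
    (hB : ContinuousOn B (Set.Ici 0)) (hB' : ContinuousOn B' (Set.Ici 0))
    (hR : Continuous R) (hR' : Continuous R')
    (heq : ∀ x y : ℝ, 0 < x → 0 < y →
      A y / x + B x / y + R (x, y) = A' y / x + B' x / y + R' (x, y)) :
    (∀ y : ℝ, 0 ≤ y → A y = A' y) ∧ (∀ x : ℝ, 0 ≤ x → B x = B' x) ∧
      ∀ x y : ℝ, 0 < x → 0 < y → R (x, y) = R' (x, y) := by
  -- A = A' on (0, ∞)
  have hApos : ∀ y : ℝ, 0 < y → A y = A' y := by
    intro y hy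
    have key : (A y - A' y) = 0 := by
      apply aux_const_eq_zero (f := fun x =>
        -(x * (fun t => B t - B' t) x / y + x * (R (x, y) - R' (x, y))))
      · have h1 : Filter.Tendsto (fun x => x * (B x - B' x)) (𝓝[>] (0:ℝ)) (𝓝 0) :=
          aux_mul_tendsto (hB.sub hB')
        have h2 : Filter.Tendsto (fun x : ℝ => x * (R (x, y) - R' (x, y)))
            (𝓝[>] (0:ℝ)) (𝓝 0) := by
          have hc : Continuous (fun x : ℝ => x * (R (x, y) - R' (x, y))) := by
            continuity
          have := hc.tendsto 0
          simp only [zero_mul] at this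
          exact this.mono_left nhdsWithin_le_nhds
        have := ((h1.div_const y).add h2).neg
        simpa using this
      · intro x hx
        have h := heq x y hx hy
        have hxne : x ≠ 0 := ne_of_gt hx
        have hyne : y ≠ 0 := ne_of_gt hy
        field_simp at h ⊢
        ring_nf
        ring_nf at h
        linarith
    linarith
  -- B = B' on (0, ∞)
  have hBpos : ∀ x : ℝ, 0 < x → B x = B' x := by
    intro x hx
    have key : (B x - B' x) = 0 := by
      apply aux_const_eq_zero (f := fun y =>
        -(y * (fun t => A t - A' t) y / x + y * (R (x, y) - R' (x, y))))
      · have h1 : Filter.Tendsto (fun y => y * (A y - A' y)) (𝓝[>] (0:ℝ)) (𝓝 0) :=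
          aux_mul_tendsto (hA.sub hA')
        have h2 : Filter.Tendsto (fun y : ℝ => y * (R (x, y) - R' (x, y)))
            (𝓝[>] (0:ℝ)) (𝓝 0) := by
          have hc : Continuous (fun y : ℝ => y * (R (x, y) - R' (x, y))) := by
            continuity
          have := hc.tendsto 0
          simp only [zero_mul] at this
          exact this.mono_left nhdsWithin_le_nhds
        have := ((h1.div_const x).add h2).neg
        simpa using this
      · intro y hy
        have h := heq x y hx hy
        have hxne : x ≠ 0 := ne_of_gt hx
        have hyne : y ≠ 0 := ne_of_gt hy
        field_simp at h ⊢
        ring_nf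
        ring_nf at h
        linarith
    linarith
  -- extend to 0 by continuity
  have hA0 : A 0 = A' 0 := by
    have t1 : Filter.Tendsto A (𝓝[>] (0:ℝ)) (𝓝 (A 0)) :=
      (hA 0 Set.self_mem_Ici).mono_left (nhdsWithin_mono _ Set.Ioi_subset_Ici_self)
    have t2 : Filter.Tendsto A' (𝓝[>] (0:ℝ)) (𝓝 (A' 0)) :=
      (hA' 0 Set.self_mem_Ici).mono_left (nhdsWithin_mono _ Set.Ioi_subset_Ici_self)
    have he : A =ᶠ[𝓝[>] (0:ℝ)] A' := by
      filter_upwards [self_mem_nhdsWithin] with y hy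
      exact hApos y hy
    exact tendsto_nhds_unique (t1.congr' he) t2
  have hB0 : B 0 = B' 0 := by
    have t1 : Filter.Tendsto B (𝓝[>] (0:ℝ)) (𝓝 (B 0)) :=
      (hB 0 Set.self_mem_Ici).mono_left (nhdsWithin_mono _ Set.Ioi_subset_Ici_self)
    have t2 : Filter.Tendsto B' (𝓝[>] (0:ℝ)) (𝓝 (B' 0)) :=
      (hB' 0 Set.self_mem_Ici).mono_left (nhdsWithin_mono _ Set.Ioi_subset_Ici_self)
    have he : B =ᶠ[𝓝[>] (0:ℝ)] B' := by
      filter_upwards [self_mem_nhdsWithin] with x hx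
      exact hBpos x hx
    exact tendsto_nhds_unique (t1.congr' he) t2
  refine ⟨?_, ?_, ?_⟩
  · intro y hy
    rcases eq_or_lt_of_le hy with h | h
    · rw [← h]; exact hA0
    · exact hApos y h
  · intro x hx
    rcases eq_or_lt_of_le hx with h | h
    · rw [← h]; exact hB0
    · exact hBpos x h
  · intro x y hx hy
    have h := heq x y hx hy
    rw [hApos y hy, hBpos x hx] at h
    linarith
end

section
/- There is no constant c ≠ 0 and continuous function r : [0,∞) → ℝ such that the function g(x) = c/x + r(x) on (0,∞) satisfies: for every smooth nonnegative curve γ : ℝ → ℝ with γ(0) = 0, the limit as t → 0 of g(γ(t))·γ'(t)² equals 0. In particular, taking γ(t) = t², one gets lim_{t→0} (c/t² + r(t²))·(2t)² = 4c ≠ 0. -/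
/-- Metric exclusion of the singular part: there is no `c ≠ 0` and continuous
`r : [0,∞) → ℝ` such that `g(x) = c/x + r(x)` satisfies: for every smooth
nonnegative curve `γ` with `γ(0) = 0`, `g(γ(t))·γ'(t)² → 0` as `t → 0`. -/
theorem stmt_19 :
    ¬ ∃ (c : ℝ) (r : ℝ → ℝ), c ≠ 0 ∧ ContinuousOn r (Set.Ici 0) ∧
      ∀ γ : ℝ → ℝ, ContDiff ℝ (⊤ : ℕ∞) γ → (∀ t, 0 ≤ γ t) → γ 0 = 0 →
        Filter.Tendsto (fun t => (c / γ t + r (γ t)) * (deriv γ t) ^ 2)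
          (nhdsWithin 0 {0}ᶜ) (nhds 0) := by
  rintro ⟨c, r, hc, hr, h⟩
  have hγ : ContDiff ℝ (⊤ : ℕ∞) (fun t : ℝ => t ^ 2) := contDiff_id.pow 2
  have hd : ∀ t : ℝ, deriv (fun t : ℝ => t ^ 2) t = 2 * t := by
    intro t
    simp
  have H := h (fun t => t ^ 2) hγ (fun t => sq_nonneg t) (by norm_num)
  -- r (t^2) tends to r 0
  have hr0 : Filter.Tendsto (fun t : ℝ => r (t ^ 2)) (nhdsWithin 0 {0}ᶜ)
      (nhds (r 0)) := by
    have h1 : Filter.Tendsto (fun t : ℝ => t ^ 2) (nhdsWithin 0 {0}ᶜ)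
        (nhdsWithin 0 (Set.Ici 0)) := by
      apply Filter.Tendsto.mono_left ?_ nhdsWithin_le_nhds
      refine tendsto_nhdsWithin_of_tendsto_nhds_of_eventually_within _ ?_ ?_
      · simpa using ((continuous_pow 2).tendsto (0:ℝ))
      · exact Filter.Eventually.of_forall (fun t => sq_nonneg t)
    exact (hr 0 (Set.self_mem_Ici)).tendsto.comp h1
  have H2 : Filter.Tendsto
      (fun t : ℝ => (c / (t ^ 2) + r (t ^ 2)) * (deriv (fun t : ℝ => t ^ 2) t) ^ 2)
      (nhdsWithin 0 {0}ᶜ) (nhds (4 * c + 0)) := by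
    have heq : ∀ t ∈ ({0}ᶜ : Set ℝ),
        4 * c + (r (t ^ 2) * (4 * t ^ 2)) =
          (c / (t ^ 2) + r (t ^ 2)) * (deriv (fun t : ℝ => t ^ 2) t) ^ 2 := by
      intro t ht
      have ht0 : t ≠ 0 := ht
      rw [hd]
      field_simp
      ring
    refine Filter.Tendsto.congr' (eventually_nhdsWithin_of_forall heq) ?_
    · have : Filter.Tendsto (fun t : ℝ => r (t ^ 2) * (4 * t ^ 2))
          (nhdsWithin 0 {0}ᶜ) (nhds (r 0 * (4 * 0 ^ 2))) := by
        refine hr0.mul ?_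
        apply Filter.Tendsto.mono_left ?_ nhdsWithin_le_nhds
        exact (continuous_const.mul (continuous_pow 2)).tendsto 0
      simpa using (tendsto_const_nhds.add this)
  have huniq : (4 * c + 0 : ℝ) = 0 :=
    tendsto_nhds_unique H2 H
  simp at huniq
  exact hc huniq
end
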